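/- Let K > 0, ε > 0, τ_ε := −3K/(9K + 2πiε), and ξ_ε := 2πε/(9K). For every real u, setting z := (1 − iξ_ε)u/(9K), the three products θ₀(z,τ_ε)·conj(θ₂(z,τ_ε)), θ₁(z,τ_ε)·conj(θ₂(z,τ_ε)), and θ₀(z,τ_ε)·conj(θ₁(z,τ_ε)) are real numbers; equivalently, the point (θ₂(z,τ_ε), θ₀(z,τ_ε), θ₁(z,τ_ε)) lies in the real projective plane, i.e. on the real part of the Hesse cubic curve. -/

import Mathlib

open Complex

/-- The level-three theta function `θ_k(z,τ)`. -/
noncomputable def theta (k : ℤ) (z τ : ℂ) : ℂ :=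
  ∑' n : ℤ, Complex.exp (3 * Real.pi * Complex.I * ((n : ℂ) + (k : ℂ) / 3 - 1 / 6) ^ 2 * τ) *
    Complex.exp (6 * Real.pi * Complex.I * ((n : ℂ) + (k : ℂ) / 3 - 1 / 6) * (z + 1 / 2))

/-!
Under `τ ↦ τ' = -1/(3τ)`, `θ_k(z,τ)` is a `k`-independent factor times
`ϑ(k/3 - 1/6 + w, τ')` with `w = (z + 1/2)/τ`. Conjugation sends `θ_k(z,τ)` to
`θ_k(-z̄ - 1, -τ̄)`. If `Re τ'` is an integer `m` and `z/τ` is real (on the circle,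
`τ' = 1 + iξ`), transforming this in the same way gives `ϑ(k/3 - 1/6 + w + 3τ' - 3m, τ' - 2m)`, which the
(quasi-)periodicity of `ϑ` reduces to the same value `ϑ(k/3 - 1/6 + w, τ')`, the quasi-period
factor being `k`-independent because `exp(-6πi(k/3 - 1/6)) = -1`. So `θ_j · conj θ_k` is
symmetric in `j, k`, hence real.
-/

open Real ComplexConjugate

noncomputable def thetaChar (k : ℤ) : ℂ := k / 3 - 1 / 6

lemma theta_eq_exp_mul_jacobiTheta₂ (k : ℤ) (z τ : ℂ) :
    theta k z τ =
      cexp (3 * π * I * thetaChar k ^ 2 * τ + 6 * π * I * thetaChar k * (z + 1 / 2)) *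
        jacobiTheta₂ (3 * thetaChar k * τ + 3 * (z + 1 / 2)) (3 * τ) := by
  rw [theta, jacobiTheta₂, ← tsum_mul_left]
  refine tsum_congr fun n => ?_
  rw [jacobiTheta₂_term, ← Complex.exp_add, ← Complex.exp_add, thetaChar]
  ring_nf

lemma theta_eq_mul_jacobiTheta₂_neg_inv (k : ℤ) (z : ℂ) {τ : ℂ} (hτ : τ ≠ 0) :
    theta k z τ = 1 / (-I * (3 * τ)) ^ (1 / 2 : ℂ) * cexp (-3 * π * I * (z + 1 / 2) ^ 2 / τ) *
      jacobiTheta₂ (thetaChar k + (z + 1 / 2) / τ) (-1 / (3 * τ)) := by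
  have harg :
      (3 * thetaChar k * τ + 3 * (z + 1 / 2)) / (3 * τ) = thetaChar k + (z + 1 / 2) / τ := by
    field_simp
  have hexp : cexp (3 * π * I * thetaChar k ^ 2 * τ + 6 * π * I * thetaChar k * (z + 1 / 2)) *
      cexp (-π * I * (3 * thetaChar k * τ + 3 * (z + 1 / 2)) ^ 2 / (3 * τ)) =
      cexp (-3 * π * I * (z + 1 / 2) ^ 2 / τ) := by
    rw [← Complex.exp_add]
    congr 1
    field_simp
    ring
  rw [theta_eq_exp_mul_jacobiTheta₂, jacobiTheta₂_functional_equation, harg, ← hexp]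
  ring

lemma theta_conj (k : ℤ) (z τ : ℂ) :
    conj (theta k z τ) = theta k (-conj z - 1) (-conj τ) := by
  rw [theta, theta, conj_tsum]
  refine tsum_congr fun n => ?_
  rw [map_mul, ← Complex.exp_conj, ← Complex.exp_conj, ← Complex.exp_add, ← Complex.exp_add]
  congr 1
  simp only [map_mul, map_add, map_sub, map_div₀, map_pow, map_ofNat, map_one,
    Complex.conj_I, Complex.conj_ofReal, map_intCast]
  ring

lemma jacobiTheta₂_add_nat_mul_self (x t : ℂ) (n : ℕ) :
    jacobiTheta₂ (x + n * t) t = cexp (-π * I * (n ^ 2 * t + 2 * n * x)) * jacobiTheta₂ x t := by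
  induction n with
  | zero => simp
  | succ n ih =>
    rw [Nat.cast_succ, add_one_mul, ← add_assoc, jacobiTheta₂_add_left', ih, ← mul_assoc,
      ← Complex.exp_add]
    congr 2
    ring

lemma jacobiTheta₂_thetaChar_add_three_mul_self (k : ℤ) (w t : ℂ) :
    jacobiTheta₂ (thetaChar k + w + 3 * t) t =
      -cexp (-π * I * (9 * t + 6 * w)) * jacobiTheta₂ (thetaChar k + w) t := by
  have hk : cexp (-π * I * (9 * t + 6 * (thetaChar k + w))) =
      cexp (-π * I * (9 * t + 6 * w)) * cexp ((-k : ℤ) * (2 * π * I)) * cexp (π * I) := by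
    rw [← Complex.exp_add, ← Complex.exp_add, thetaChar]
    push_cast
    ring_nf
  rw [show (3 : ℂ) * t = (3 : ℕ) * t by norm_num, jacobiTheta₂_add_nat_mul_self, Nat.cast_ofNat,
    show (3 : ℂ) ^ 2 * t + 2 * 3 * (thetaChar k + w) = 9 * t + 6 * (thetaChar k + w) by ring,
    hk, exp_int_mul_two_pi_mul_I, exp_pi_mul_I]
  ring

lemma jacobiTheta₂_sub_int_sub_two_mul_int (x t : ℂ) (a b : ℤ) :
    jacobiTheta₂ (x - a) (t - 2 * b) = jacobiTheta₂ x t := by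
  have hperiod_τ : Function.Periodic (jacobiTheta₂ (x - a)) 2 := jacobiTheta₂_add_right _
  have hperiod_z : Function.Periodic (jacobiTheta₂ · t) 1 := (jacobiTheta₂_add_left · t)
  rw [show t - 2 * b = t - b * 2 by ring, hperiod_τ.sub_int_mul_eq,
    show x - a = x - a * 1 by ring, hperiod_z.sub_int_mul_eq]

lemma conj_neg_inv_three_mul {τ : ℂ} {m : ℤ} (hm : (-1 / (3 * τ)).re = m) :
    conj (-1 / (3 * τ)) = 2 * m - -1 / (3 * τ) := by
  have h := Complex.re_eq_add_conj (-1 / (3 * τ))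
  rw [hm] at h
  linear_combination -2 * h

lemma neg_inv_three_mul_neg_conj {τ : ℂ} {m : ℤ} (hm : (-1 / (3 * τ)).re = m) :
    -1 / (3 * -conj τ) = -1 / (3 * τ) - 2 * m := by
  calc -1 / (3 * -conj τ) = -conj (-1 / (3 * τ)) := by
        simp [map_div₀, map_ofNat]
        ring
    _ = -1 / (3 * τ) - 2 * m := by
        rw [conj_neg_inv_three_mul hm]
        ring

lemma add_half_div_neg_conj {z τ : ℂ} {m : ℤ} (hτ : τ ≠ 0) (hm : (-1 / (3 * τ)).re = m)
    (hz : (z / τ).im = 0) :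
    (-conj z - 1 + 1 / 2) / -conj τ = (z + 1 / 2) / τ + 3 * (-1 / (3 * τ)) - 3 * m := by
  have hsplit : (z + 1 / 2) / τ = z / τ - 3 / 2 * (-1 / (3 * τ)) := by
    field_simp
    ring
  calc (-conj z - 1 + 1 / 2) / -conj τ = conj ((z + 1 / 2) / τ) := by
        simp [map_div₀, map_ofNat]
        ring
    _ = z / τ - 3 / 2 * conj (-1 / (3 * τ)) := by
        rw [hsplit, map_sub, map_mul, conj_eq_iff_im.mpr hz]
        simp only [map_div₀, map_ofNat]
    _ = (z + 1 / 2) / τ + 3 * (-1 / (3 * τ)) - 3 * m := by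
        rw [conj_neg_inv_three_mul hm, hsplit]
        ring

lemma exists_conj_theta_eq_mul_jacobiTheta₂ {z τ : ℂ} (m : ℤ) (hτ : τ ≠ 0)
    (hm : (-1 / (3 * τ)).re = m) (hz : (z / τ).im = 0) :
    ∃ c, ∀ k, conj (theta k z τ) =
      c * jacobiTheta₂ (thetaChar k + (z + 1 / 2) / τ) (-1 / (3 * τ)) := by
  set τ' := -1 / (3 * τ)
  set w := (z + 1 / 2) / τ
  have hτ_conj : -conj τ ≠ 0 := neg_ne_zero.mpr ((map_ne_zero _).mpr hτ)
  refine ⟨-(1 / (-I * (3 * -conj τ)) ^ (1 / 2 : ℂ) *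
    cexp (-3 * π * I * (-conj z - 1 + 1 / 2) ^ 2 / -conj τ) * cexp (-π * I * (9 * τ' + 6 * w))),
    fun k => ?_⟩
  rw [theta_conj, theta_eq_mul_jacobiTheta₂_neg_inv k _ hτ_conj, neg_inv_three_mul_neg_conj hm,
    add_half_div_neg_conj hτ hm hz,
    show thetaChar k + (w + 3 * τ' - 3 * m) = thetaChar k + w + 3 * τ' - (3 * m : ℤ) by
      push_cast; ring,
    jacobiTheta₂_sub_int_sub_two_mul_int, jacobiTheta₂_thetaChar_add_three_mul_self]
  ring

lemma im_mul_conj_eq_zero_of_forall_eq_mul {ι : Type*} {f g : ι → ℂ} {a b : ℂ}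
    (hf : ∀ i, f i = a * g i) (hf_conj : ∀ i, conj (f i) = b * g i) (i j : ι) :
    (f i * conj (f j)).im = 0 := by
  rw [← conj_eq_iff_im, map_mul, conj_conj, hf_conj, hf_conj j, hf, hf]
  ring

theorem theta_mul_conj_theta_im_eq_zero {z τ : ℂ} (m : ℤ) (hτ : τ ≠ 0)
    (hm : (-1 / (3 * τ)).re = m) (hz : (z / τ).im = 0) (j k : ℤ) :
    (theta j z τ * conj (theta k z τ)).im = 0 := by
  obtain ⟨c, hc⟩ := exists_conj_theta_eq_mul_jacobiTheta₂ m hτ hm hz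
  exact im_mul_conj_eq_zero_of_forall_eq_mul (fun k => theta_eq_mul_jacobiTheta₂_neg_inv k z hτ)
    hc j k

theorem theta_real_on_circle_general (K ε u : ℝ) (hK : 0 < K)
    (τ : ℂ) (hτ : τ = -3 * K / (9 * K + 2 * Real.pi * Complex.I * ε))
    (ξ : ℝ) (hξ : ξ = 2 * Real.pi * ε / (9 * K))
    (z : ℂ) (hz : z = (1 - Complex.I * ξ) * u / (9 * K)) :
    (theta 0 z τ * (starRingEnd ℂ) (theta 2 z τ)).im = 0 ∧
    (theta 1 z τ * (starRingEnd ℂ) (theta 2 z τ)).im = 0 ∧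
    (theta 0 z τ * (starRingEnd ℂ) (theta 1 z τ)).im = 0 := by
  have hK' : (K : ℂ) ≠ 0 := ofReal_ne_zero.mpr hK.ne'
  have hden : 9 * (K : ℂ) + 2 * π * I * ε ≠ 0 := by
    intro h
    simpa [hK.ne'] using congrArg re h
  have hτ0 : τ ≠ 0 := by
    rw [hτ]
    exact div_ne_zero (by simpa using hK') hden
  have hS : -1 / (3 * τ) = 1 + ξ * I := by
    rw [hτ, hξ]
    push_cast
    field_simp
    ring
  have hzτ : z / τ = ((-(1 + ξ ^ 2) * u / (3 * K) : ℝ) : ℂ) := by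
    rw [hz, hτ, hξ]
    push_cast
    field_simp
    ring_nf
    rw [I_sq]
    ring
  have hre : (-1 / (3 * τ)).re = (1 : ℤ) := by simp [hS]
  have him : (z / τ).im = 0 := by rw [hzτ, ofReal_im]
  exact ⟨theta_mul_conj_theta_im_eq_zero 1 hτ0 hre him 0 2,
    theta_mul_conj_theta_im_eq_zero 1 hτ0 hre him 1 2,
    theta_mul_conj_theta_im_eq_zero 1 hτ0 hre him 0 1⟩

/-- Along the circle `l_ε`, the point `(θ₂(z), θ₀(z), θ₁(z))` lies on the real part of
the Hesse cubic: the pairwise products with conjugates are real. -/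
theorem theta_real_on_circle (K ε u : ℝ) (hK : 0 < K) (hε : 0 < ε)
    (τ : ℂ) (hτ : τ = -3 * K / (9 * K + 2 * Real.pi * Complex.I * ε))
    (ξ : ℝ) (hξ : ξ = 2 * Real.pi * ε / (9 * K))
    (z : ℂ) (hz : z = (1 - Complex.I * ξ) * u / (9 * K)) :
    (theta 0 z τ * (starRingEnd ℂ) (theta 2 z τ)).im = 0 ∧
    (theta 1 z τ * (starRingEnd ℂ) (theta 2 z τ)).im = 0 ∧
    (theta 0 z τ * (starRingEnd ℂ) (theta 1 z τ)).im = 0 :=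
  theta_real_on_circle_general K ε u hK τ hτ ξ hξ z hz
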